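/- arXiv:math/0612830 — 2 statements merged into one kernel-verified Lean document; each statement's English description precedes it below -/
import Mathlib

section
/- Let p and q be coprime integers with p ≥ 2 and 0 < q < p, and suppose p/q = cf([a_1,...,a_k]) where a_1,...,a_k are positive integers. If s is the integer with 1 ≤ s ≤ p−1 and q·s ≡ (−1)^{k−1} (mod p), then p/s = cf([a_k,a_{k−1},...,a_2,a_1]); in particular s is coprime to p. -/
/-- The value of a continued fraction `[a₁, …, a_k]`, defined by
`cf [a] = a` and `cf (a :: l) = a + 1 / cf l` for nonempty `l`. -/
def cf : List ℚ → ℚ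
  | [] => 0
  | [a] => a
  | a :: b :: l => a + 1 / cf (b :: l)

def Mf (l : List ℤ) : Matrix (Fin 2) (Fin 2) ℤ := (l.map (fun a => !![a, 1; 1, 0])).prod

lemma Mf_cons (a : ℤ) (l : List ℤ) : Mf (a :: l) = !![a, 1; 1, 0] * Mf l := by simp [Mf]
lemma Mf_singleton (a : ℤ) : Mf [a] = !![a, 1; 1, 0] := by simp [Mf]
lemma Mf_append (l₁ l₂ : List ℤ) : Mf (l₁ ++ l₂) = Mf l₁ * Mf l₂ := by simp [Mf]

lemma mul_entry (a : ℤ) (N : Matrix (Fin 2) (Fin 2) ℤ) :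
    (!![a, 1; 1, 0] * N) 0 0 = a * N 0 0 + N 1 0 ∧
    (!![a, 1; 1, 0] * N) 0 1 = a * N 0 1 + N 1 1 ∧
    (!![a, 1; 1, 0] * N) 1 0 = N 0 0 ∧
    (!![a, 1; 1, 0] * N) 1 1 = N 0 1 := by
  refine ⟨?_, ?_, ?_, ?_⟩ <;> simp [Matrix.mul_apply, Fin.sum_univ_two]

lemma Mf_inv : ∀ (l : List ℤ), l ≠ [] → (∀ x ∈ l, 0 < x) →
    1 ≤ Mf l 0 0 ∧ 1 ≤ Mf l 1 0 ∧ 1 ≤ Mf l 0 1 ∧ 0 ≤ Mf l 1 1 ∧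
    Mf l 0 1 ≤ Mf l 0 0 ∧ Mf l 1 1 ≤ Mf l 1 0 ∧
    Mf l 0 1 + Mf l 1 1 + 1 ≤ Mf l 0 0 + Mf l 1 0
  | [], h, _ => absurd rfl h
  | [a], _, hpos => by
      have ha : 0 < a := hpos a (by simp)
      rw [Mf_singleton]
      norm_num [Matrix.one_apply]
      omega
  | a :: b :: l, _, hpos => by
      have ha : 0 < a := hpos a (by simp)
      obtain ⟨h1, h2, h3, h4, h5, h6, h7⟩ :=
        Mf_inv (b :: l) (by simp) (fun x hx => hpos x (by simp [hx]))
      rw [Mf_cons]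
      obtain ⟨e1, e2, e3, e4⟩ := mul_entry a (Mf (b :: l))
      rw [e1, e2, e3, e4]
      refine ⟨?_, ?_, ?_, ?_, ?_, ?_, ?_⟩ <;> nlinarith

lemma Mf_strict : ∀ (l : List ℤ), l ≠ [] → (∀ x ∈ l, 0 < x) → 2 ≤ Mf l 0 0 →
    Mf l 0 1 + 1 ≤ Mf l 0 0
  | [], h, _, _ => absurd rfl h
  | [a], _, _, h2 => by
      rw [Mf_singleton] at h2 ⊢
      norm_num at h2 ⊢
      omega
  | a :: b :: l, _, hpos, _ => by
      have ha : 0 < a := hpos a (by simp)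
      obtain ⟨h1, h2, h3, h4, h5, h6, h7⟩ :=
        Mf_inv (b :: l) (by simp) (fun x hx => hpos x (by simp [hx]))
      rw [Mf_cons]
      obtain ⟨e1, e2, -, -⟩ := mul_entry a (Mf (b :: l))
      rw [e1, e2]
      nlinarith

lemma Mf_det (l : List ℤ) : (Mf l).det = (-1) ^ l.length := by
  induction l with
  | nil => simp [Mf]
  | cons a l ih =>
      rw [Mf_cons, Matrix.det_mul, ih]
      simp [Matrix.det_fin_two]
      ring

lemma Mf_reverse (l : List ℤ) : Mf l.reverse = (Mf l).transpose := by
  induction l with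
  | nil => simp [Mf, Matrix.transpose_one]
  | cons a l ih =>
      rw [List.reverse_cons, Mf_append, Mf_singleton, Mf_cons, Matrix.transpose_mul, ih]
      congr 1
      ext i j; fin_cases i <;> fin_cases j <;> simp

lemma cf_eq : ∀ (l : List ℤ), l ≠ [] → (∀ x ∈ l, 0 < x) →
    cf (l.map (fun x => (x : ℚ))) = (Mf l 0 0 : ℚ) / (Mf l 1 0 : ℚ)
  | [], h, _ => absurd rfl h
  | [a], _, _ => by rw [Mf_singleton]; norm_num [cf]
  | a :: b :: l, _, hpos => by
      have ih := cf_eq (b :: l) (by simp) (fun x hx => hpos x (by simp [hx]))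
      obtain ⟨h1, h2, -⟩ := Mf_inv (b :: l) (by simp) (fun x hx => hpos x (by simp [hx]))
      have hA : ((Mf (b :: l) 0 0 : ℤ) : ℚ) ≠ 0 := by
        exact_mod_cast (by omega : Mf (b :: l) 0 0 ≠ 0)
      show (a : ℚ) + 1 / cf ((b :: l).map (fun x => (x : ℚ))) = _
      rw [ih, one_div_div]
      conv_rhs => rw [Mf_cons a (b :: l)]
      obtain ⟨e1, -, e3, -⟩ := mul_entry a (Mf (b :: l))
      rw [e1, e3]
      push_cast
      field_simp

/-- Let `p, q` be coprime with `p ≥ 2`, `0 < q < p`, and suppose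
`p/q = cf [a₁, …, a_k]` with positive integer entries. If `1 ≤ s ≤ p - 1` and
`q * s ≡ (-1) ^ (k - 1) (mod p)`, then `p/s = cf [a_k, …, a₁]`; in particular `s` is
coprime to `p`. -/
theorem stmt_6 (p q s : ℤ) (hp : 2 ≤ p) (hq0 : 0 < q) (hqp : q < p) (hcop : IsCoprime p q)
    (l : List ℤ) (hne : l ≠ []) (hpos : ∀ x ∈ l, 0 < x)
    (hcf : (p : ℚ) / (q : ℚ) = cf (l.map (fun x => (x : ℚ))))
    (hs1 : 1 ≤ s) (hs2 : s ≤ p - 1)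
    (hmod : Int.ModEq p (q * s) ((-1) ^ (l.length - 1))) :
    (p : ℚ) / (s : ℚ) = cf (l.reverse.map (fun x => (x : ℚ))) ∧ IsCoprime p s := by
  obtain ⟨i1, i2, i3, i4, i5, i6, i7⟩ := Mf_inv l hne hpos
  set A := Mf l 0 0 with hA
  set B := Mf l 0 1 with hB
  set C := Mf l 1 0 with hC
  set D := Mf l 1 1 with hD
  set k := l.length with hk
  have hk1 : 1 ≤ k := by
    cases l with
    | nil => exact absurd rfl hne
    | cons a l => simp [hk]
  have hdet : A * D - B * C = (-1) ^ k := by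
    have := Mf_det l
    rwa [Matrix.det_fin_two] at this
  have hsq : ((-1 : ℤ)) ^ k * (-1) ^ k = 1 := by
    rw [← pow_add]
    exact Even.neg_one_pow ⟨k, by ring⟩
  have hpow : ((-1 : ℤ)) ^ k = -(-1) ^ (k - 1) := by
    conv_lhs => rw [show k = (k - 1) + 1 by omega]
    rw [pow_succ]
    ring
  -- p = A, q = C
  have hq0' : ((q : ℤ) : ℚ) ≠ 0 := by exact_mod_cast hq0.ne'
  have hC0' : ((C : ℤ) : ℚ) ≠ 0 := by exact_mod_cast (by omega : C ≠ 0)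
  have hcross : p * C = q * A := by
    have h := hcf
    rw [cf_eq l hne hpos] at h
    rw [div_eq_div_iff hq0' hC0'] at h
    have h' : p * C = A * q := by exact_mod_cast h
    linarith
  have hcopAC : IsCoprime A C :=
    ⟨(-1) ^ k * D, -((-1) ^ k * B), by linear_combination (-1 : ℤ) ^ k * hdet + hsq⟩
  have hpA : p = A := by
    have h1 : p ∣ A := hcop.dvd_of_dvd_mul_left ⟨C, by linarith⟩
    have h2 : A ∣ p := hcopAC.dvd_of_dvd_mul_right ⟨q, by linarith⟩
    exact Int.dvd_antisymm (by omega) (by omega) h1 h2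
  have hqC : q = C := by
    have h : p * C = p * q := by rw [hcross, hpA]; ring
    exact (mul_left_cancel₀ (by omega : (p : ℤ) ≠ 0) h).symm
  -- q * B ≡ (-1)^(k-1) mod p
  have hmodB : Int.ModEq p (q * B) ((-1) ^ (k - 1)) := by
    have h1 : (-1 : ℤ) ^ (k - 1) - q * B = p * (-D) := by
      rw [hqC, hpA]
      linear_combination hdet + hpow
    exact Int.modEq_iff_dvd.mpr ⟨_, h1⟩
  -- s = B
  have hsB : s = B := by
    have h1 : p ∣ q * B - q * s := (hmod.trans hmodB.symm).dvd
    have h2 : p ∣ (B - s) * q := by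
      have : (B - s) * q = q * B - q * s := by ring
      rwa [this]
    have h3 : p ∣ B - s := hcop.dvd_of_dvd_mul_right h2
    have hBlt : B + 1 ≤ A := Mf_strict l hne hpos (by omega)
    by_contra hne'
    have h4 : B - s ≠ 0 := fun h => hne' (by omega)
    have h5 : p ≤ |B - s| := Int.le_of_dvd (abs_pos.mpr h4) ((dvd_abs _ _).mpr h3)
    have h6 : |B - s| ≤ p - 2 := abs_le.mpr ⟨by omega, by omega⟩
    omega
  -- conclusion
  have hrevne : l.reverse ≠ [] := by simpa using hne
  have hrevpos : ∀ x ∈ l.reverse, 0 < x := fun x hx => hpos x (List.mem_reverse.mp hx)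
  have hcfrev : cf (l.reverse.map (fun x => (x : ℚ))) = (A : ℚ) / (B : ℚ) := by
    rw [cf_eq l.reverse hrevne hrevpos, Mf_reverse]
    rfl
  constructor
  · rw [hcfrev, hpA, hsB]
  · rw [hpA, hsB]
    exact ⟨(-1) ^ k * D, -((-1) ^ k * C), by linear_combination (-1 : ℤ) ^ k * hdet + hsq⟩
end

section
/- Let p and q be coprime integers with p ≥ 2 and 0 < q < p. Then ℓ(p,q) is the minimum, over all integers q' with 0 < q' < p satisfying q' ≡ q, q' ≡ −q, q'·q ≡ 1, or q'·q ≡ −1 (mod p), and over all nonempty lists [b_1,...,b_m] of positive integers with cf([b_1,...,b_m]) = p/q', of the length m. (This is Proposition 1.1 of the paper: ℓ(p,q) is the minimum of the lengths of positive continued fraction expansions of the rationals p'/q' with K(p',q') equivalent to K(p,q), using that K(p,q') is equivalent to K(p,q) exactly when q' ≡ ±q^{±1} (mod p).) -/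
def cfZ (l : List ℤ) : ℚ := cf (l.map (fun a => (a : ℚ)))

lemma cf_cons_cons (a b : ℚ) (l : List ℚ) : cf (a :: b :: l) = a + 1 / cf (b :: l) := rfl

@[simp] lemma cfZ_singleton (x : ℤ) : cfZ [x] = x := by simp [cfZ, cf]

lemma cfZ_cons (x : ℤ) (l : List ℤ) (hl : l ≠ []) :
    cfZ (x :: l) = x + 1 / cfZ l := by
  cases l with
  | nil => simp at hl
  | cons y t => simp only [cfZ, List.map_cons]; rfl

def Pos (l : List ℤ) : Prop := ∀ x ∈ l, 0 < x

lemma cf_ge_one (l : List ℤ) (hl : l ≠ []) (hp : Pos l) : 1 ≤ cfZ l := by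
  induction l with
  | nil => simp at hl
  | cons x t ih =>
    have hx : 1 ≤ x := hp x (by simp)
    cases t with
    | nil => simpa using by exact_mod_cast hx
    | cons y s =>
      have ht : (y :: s : List ℤ) ≠ [] := by simp
      have hpt : Pos (y :: s) := fun a ha => hp a (List.mem_cons_of_mem _ ha)
      have h1 := ih ht hpt
      rw [cfZ_cons x _ ht]
      have : (0:ℚ) < 1 / cfZ (y :: s) := by positivity
      have hx' : (1:ℚ) ≤ (x:ℚ) := by exact_mod_cast hx
      linarith

lemma cf_pos (l : List ℤ) (hl : l ≠ []) (hp : Pos l) : 0 < cfZ l :=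
  lt_of_lt_of_le one_pos (cf_ge_one l hl hp)

lemma one_lt_cf (l : List ℤ) (hl : l ≠ []) (hp : Pos l) (h1 : l ≠ [1]) : 1 < cfZ l := by
  cases l with
  | nil => simp at hl
  | cons x t =>
    have hx : 1 ≤ x := hp x (by simp)
    cases t with
    | nil =>
      have : x ≠ 1 := by simpa using h1
      have : 2 ≤ x := by omega
      simpa using by exact_mod_cast lt_of_lt_of_le one_lt_two (by exact_mod_cast this : (2:ℚ) ≤ x)
    | cons y s =>
      have ht : (y :: s : List ℤ) ≠ [] := by simp
      have hpt : Pos (y :: s) := fun a ha => hp a (List.mem_cons_of_mem _ ha)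
      have h1' := cf_ge_one _ ht hpt
      rw [cfZ_cons x _ ht]
      have : (0:ℚ) < 1 / cfZ (y :: s) := by positivity
      have hx' : (1:ℚ) ≤ (x:ℚ) := by exact_mod_cast hx
      linarith

lemma cf_bounds (x : ℤ) (l : List ℤ) (hl : l ≠ []) (hp : Pos (x :: l)) :
    (x:ℚ) < cfZ (x :: l) ∧ cfZ (x :: l) ≤ x + 1 := by
  have hpt : Pos l := fun a ha => hp a (List.mem_cons_of_mem _ ha)
  have h1 := cf_ge_one l hl hpt
  rw [cfZ_cons x l hl]
  constructor
  · have : (0:ℚ) < 1 / cfZ l := by positivity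
    linarith
  · have : 1 / cfZ l ≤ 1 := by
      rw [div_le_one (by linarith)]; linarith
    linarith

def LastBig (l : List ℤ) : Prop := ∀ a, l.getLast? = some a → 2 ≤ a

lemma lastBig_tail (x : ℤ) (l : List ℤ) (hl : l ≠ []) (h : LastBig (x :: l)) : LastBig l := by
  intro a ha
  cases l with
  | nil => simp at hl
  | cons y t => exact h a (by rwa [List.getLast?_cons_cons])

lemma ne_one_of_lastBig (l : List ℤ) (h : LastBig l) : l ≠ [1] := by
  rintro rfl
  have := h 1 rfl
  omega

lemma min_length (bl : List ℤ) : ∀ c : List ℤ, Pos bl → Pos c → bl ≠ [] → c ≠ [] →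
    LastBig c → cfZ bl = cfZ c → c.length ≤ bl.length := by
  induction bl with
  | nil => intro c _ _ h; simp at h
  | cons m bl' ih =>
    intro c hpb hpc _ hcne hcl hcf
    cases c with
    | nil => simp at hcne
    | cons n c' =>
      cases c' with
      | nil =>
        simp only [List.length_cons, List.length_nil]
        omega
      | cons y s =>
        -- c = n :: c' with c' = y :: s nonempty
        set c' := (y :: s : List ℤ) with hc'
        have hc'ne : c' ≠ [] := by simp [hc']
        have hpc' : Pos c' := fun a ha => hpc a (List.mem_cons_of_mem _ ha)
        have hc'big : LastBig c' := lastBig_tail n c' hc'ne hcl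
        have hc'ne1 : c' ≠ [1] := ne_one_of_lastBig c' hc'big
        have h1c' : 1 < cfZ c' := one_lt_cf c' hc'ne hpc' hc'ne1
        have hcfc : cfZ (n :: c') = n + 1 / cfZ c' := cfZ_cons n c' hc'ne
        have hub : cfZ (n :: c') < n + 1 := by
          rw [hcfc]
          have : 1 / cfZ c' < 1 := by
            rw [div_lt_one (by linarith)]; linarith
          linarith
        have hlb : (n:ℚ) < cfZ (n :: c') := by
          rw [hcfc]
          have : (0:ℚ) < 1 / cfZ c' := by positivity
          linarith
        cases bl' with
        | nil =>
          -- cf bl = m, integer, but n < cf c < n+1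
          exfalso
          have : (n:ℚ) < (m:ℚ) ∧ (m:ℚ) < n + 1 := by
            constructor
            · rw [← hcf] at hlb; simpa using hlb
            · rw [← hcf] at hub; simpa using hub
          have h1 : n < m := by exact_mod_cast this.1
          have h2 : (m:ℚ) < ((n+1 : ℤ) : ℚ) := by push_cast; exact this.2
          have h2' : m < n + 1 := by exact_mod_cast h2
          omega
        | cons z w =>
          set bl'' := (z :: w : List ℤ) with hb'
          have hbne : bl'' ≠ [] := by simp [hb']
          have hpb' : Pos bl'' := fun a ha => hpb a (List.mem_cons_of_mem _ ha)
          have hbnds := cf_bounds m bl'' hbne hpb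
          have hm : m = n := by
            have h1 : (n:ℚ) < (m:ℚ) + 1 := by
              calc (n:ℚ) < cfZ (n :: c') := hlb
              _ = cfZ (m :: bl'') := hcf.symm
              _ ≤ m + 1 := hbnds.2
            have h2 : (m:ℚ) < (n:ℚ) + 1 := by
              calc (m:ℚ) < cfZ (m :: bl'') := hbnds.1
              _ = cfZ (n :: c') := hcf
              _ < n + 1 := hub
            have h1' : (n:ℚ) < ((m+1:ℤ):ℚ) := by push_cast; linarith
            have h2' : (m:ℚ) < ((n+1:ℤ):ℚ) := by push_cast; linarith
            have i1 : n < m + 1 := by exact_mod_cast h1'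
            have i2 : m < n + 1 := by exact_mod_cast h2'
            omega
          have heq : cfZ bl'' = cfZ c' := by
            have e1 : cfZ (m :: bl'') = m + 1 / cfZ bl'' := cfZ_cons m bl'' hbne
            have e2 : cfZ (n :: c') = n + 1 / cfZ c' := hcfc
            have hpos1 : 0 < cfZ bl'' := cf_pos bl'' hbne hpb'
            have hpos2 : 0 < cfZ c' := cf_pos c' hc'ne hpc'
            have : 1 / cfZ bl'' = 1 / cfZ c' := by
              rw [e1, e2] at hcf
              subst hm
              linarith
            field_simp at this
            linarith
          have := ih c' hpb' hpc' hbne hc'ne hc'big heq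
          simpa using Nat.succ_le_succ this

def ct : List ℤ → ℤ × ℤ × ℤ × ℤ
  | [] => (1, 0, 0, 1)
  | x :: l => (x * (ct l).1 + (ct l).2.2.1, x * (ct l).2.1 + (ct l).2.2.2, (ct l).1, (ct l).2.1)

lemma ct_det (l : List ℤ) :
    (ct l).1 * (ct l).2.2.2 - (ct l).2.1 * (ct l).2.2.1 = (-1) ^ l.length := by
  induction l with
  | nil => simp [ct]
  | cons x t ih =>
    simp only [ct, List.length_cons, pow_succ]
    ring_nf
    ring_nf at ih
    nlinarith [ih]

lemma ct_bounds (l : List ℤ) (hl : l ≠ []) (hp : Pos l) :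
    1 ≤ (ct l).1 ∧ 1 ≤ (ct l).2.1 ∧ 1 ≤ (ct l).2.2.1 ∧ 0 ≤ (ct l).2.2.2 ∧
    (ct l).2.1 ≤ (ct l).1 ∧ (ct l).2.2.2 ≤ (ct l).2.2.1 ∧
    (ct l).2.2.1 ≤ (ct l).1 ∧ (ct l).2.2.2 ≤ (ct l).2.1 := by
  induction l with
  | nil => simp at hl
  | cons x t ih =>
    have hx : 1 ≤ x := hp x (by simp)
    cases t with
    | nil => simp [ct]; omega
    | cons y s =>
      have h := ih (by simp) (fun a ha => hp a (List.mem_cons_of_mem _ ha))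
      simp only [ct] at *
      obtain ⟨h1, h2, h3, h4, h5, h6, h7, h8⟩ := h
      refine ⟨?_, ?_, ?_, ?_, ?_, ?_, ?_, ?_⟩ <;> nlinarith

lemma ct_last (l : List ℤ) (hl : l ≠ []) (hp : Pos l) (hL : LastBig l) :
    (ct l).2.1 + 1 ≤ (ct l).1 ∧ (ct l).2.2.2 + 1 ≤ (ct l).2.2.1 := by
  induction l with
  | nil => simp at hl
  | cons x t ih =>
    have hx : 1 ≤ x := hp x (by simp)
    cases t with
    | nil =>
      have hx2 : 2 ≤ x := hL x rfl
      simp [ct]; omega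
    | cons y s =>
      have hb := ct_bounds (y :: s) (by simp) (fun a ha => hp a (List.mem_cons_of_mem _ ha))
      have h := ih (by simp) (fun a ha => hp a (List.mem_cons_of_mem _ ha))
        (lastBig_tail x _ (by simp) hL)
      simp only [ct] at *
      obtain ⟨h1, h2, h3, h4, h5, h6, h7, h8⟩ := hb
      obtain ⟨g1, g2⟩ := h
      constructor <;> nlinarith

lemma cf_eq_div (l : List ℤ) (hl : l ≠ []) (hp : Pos l) :
    cfZ l = ((ct l).1 : ℚ) / ((ct l).2.2.1 : ℚ) := by
  induction l with
  | nil => simp at hl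
  | cons x t ih =>
    cases t with
    | nil => simp [ct]
    | cons y s =>
      have htne : (y :: s : List ℤ) ≠ [] := by simp
      have hpt : Pos (y :: s) := fun a ha => hp a (List.mem_cons_of_mem _ ha)
      have hb := ct_bounds (y :: s) htne hpt
      have h := ih htne hpt
      rw [cfZ_cons x _ htne, h]
      have e1 : (ct (x :: y :: s)).1 = x * (ct (y :: s)).1 + (ct (y :: s)).2.2.1 := rfl
      have e2 : (ct (x :: y :: s)).2.2.1 = (ct (y :: s)).1 := rfl
      rw [e1, e2]
      have hA : (0:ℚ) < ((ct (y :: s)).1 : ℚ) := by exact_mod_cast lt_of_lt_of_le one_pos hb.1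
      have hC : (0:ℚ) < ((ct (y :: s)).2.2.1 : ℚ) := by
        exact_mod_cast lt_of_lt_of_le one_pos hb.2.2.1
      generalize hAq : ((ct (y :: s)).1 : ℚ) = A at *
      generalize hCq : ((ct (y :: s)).2.2.1 : ℚ) = C at *
      push_cast [hAq, hCq]
      field_simp

lemma ct_append (l₁ l₂ : List ℤ) :
    (ct (l₁ ++ l₂)).1 = (ct l₁).1 * (ct l₂).1 + (ct l₁).2.1 * (ct l₂).2.2.1 ∧
    (ct (l₁ ++ l₂)).2.1 = (ct l₁).1 * (ct l₂).2.1 + (ct l₁).2.1 * (ct l₂).2.2.2 ∧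
    (ct (l₁ ++ l₂)).2.2.1 = (ct l₁).2.2.1 * (ct l₂).1 + (ct l₁).2.2.2 * (ct l₂).2.2.1 ∧
    (ct (l₁ ++ l₂)).2.2.2 = (ct l₁).2.2.1 * (ct l₂).2.1 + (ct l₁).2.2.2 * (ct l₂).2.2.2 := by
  induction l₁ with
  | nil => simp [ct]
  | cons x t ih =>
    obtain ⟨i1, i2, i3, i4⟩ := ih
    have e1 : (ct ((x :: t) ++ l₂)).1 = x * (ct (t ++ l₂)).1 + (ct (t ++ l₂)).2.2.1 := rfl
    have e2 : (ct ((x :: t) ++ l₂)).2.1 = x * (ct (t ++ l₂)).2.1 + (ct (t ++ l₂)).2.2.2 := rfl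
    have e3 : (ct ((x :: t) ++ l₂)).2.2.1 = (ct (t ++ l₂)).1 := rfl
    have e4 : (ct ((x :: t) ++ l₂)).2.2.2 = (ct (t ++ l₂)).2.1 := rfl
    have f1 : (ct (x :: t)).1 = x * (ct t).1 + (ct t).2.2.1 := rfl
    have f2 : (ct (x :: t)).2.1 = x * (ct t).2.1 + (ct t).2.2.2 := rfl
    have f3 : (ct (x :: t)).2.2.1 = (ct t).1 := rfl
    have f4 : (ct (x :: t)).2.2.2 = (ct t).2.1 := rfl
    rw [e1, e2, e3, e4, f1, f2, f3, f4, i1, i2, i3, i4]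
    refine ⟨by ring, by ring, by ring, by ring⟩

lemma ct_reverse (l : List ℤ) :
    (ct l.reverse).1 = (ct l).1 ∧ (ct l.reverse).2.1 = (ct l).2.2.1 ∧
    (ct l.reverse).2.2.1 = (ct l).2.1 ∧ (ct l.reverse).2.2.2 = (ct l).2.2.2 := by
  induction l with
  | nil => simp [ct]
  | cons x t ih =>
    obtain ⟨i1, i2, i3, i4⟩ := ih
    have h := ct_append t.reverse [x]
    obtain ⟨a1, a2, a3, a4⟩ := h
    have g1 : (ct (x :: t)).1 = x * (ct t).1 + (ct t).2.2.1 := rfl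
    have g2 : (ct (x :: t)).2.1 = x * (ct t).2.1 + (ct t).2.2.2 := rfl
    have g3 : (ct (x :: t)).2.2.1 = (ct t).1 := rfl
    have g4 : (ct (x :: t)).2.2.2 = (ct t).2.1 := rfl
    have c1 : (ct [x]).1 = x := by simp [ct]
    have c2 : (ct [x]).2.1 = 1 := by simp [ct]
    have c3 : (ct [x]).2.2.1 = 1 := by simp [ct]
    have c4 : (ct [x]).2.2.2 = 0 := by simp [ct]
    simp only [List.reverse_cons]
    rw [a1, a2, a3, a4, i1, i2, i3, i4, g1, g2, g3, g4, c1, c2, c3, c4]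
    refine ⟨by ring, by ring, by ring, by ring⟩

lemma coprime_of_det (a b c d e : ℤ) (h : a * d - b * c = e) (he : e = 1 ∨ e = -1) :
    IsCoprime a c ∧ IsCoprime a b := by
  constructor
  · rcases he with rfl | rfl
    · exact ⟨d, -b, by linarith⟩
    · exact ⟨-d, b, by linarith⟩
  · rcases he with rfl | rfl
    · exact ⟨d, -c, by linarith⟩
    · exact ⟨-d, c, by linarith⟩

lemma neg_one_pow (k : ℕ) : ((-1:ℤ)) ^ k = 1 ∨ ((-1:ℤ)) ^ k = -1 := by
  rcases Nat.even_or_odd k with h | h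
  · left; exact h.neg_one_pow
  · right; exact h.neg_one_pow

lemma identify (l : List ℤ) (hl : l ≠ []) (hpl : Pos l) (P Q : ℤ) (hP : 0 < P) (hQ : 0 < Q)
    (hcop : IsCoprime P Q) (h : cfZ l = (P:ℚ) / (Q:ℚ)) :
    (ct l).1 = P ∧ (ct l).2.2.1 = Q := by
  have hb := ct_bounds l hl hpl
  have hdiv := cf_eq_div l hl hpl
  set A := (ct l).1 with hA
  set C := (ct l).2.2.1 with hC
  have hA0 : 0 < A := lt_of_lt_of_le one_pos hb.1
  have hC0 : 0 < C := lt_of_lt_of_le one_pos hb.2.2.1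
  have hcross : A * Q = P * C := by
    have : (A:ℚ) / C = (P:ℚ) / Q := by rw [← hdiv, h]
    have hq : (Q:ℚ) ≠ 0 := by exact_mod_cast hQ.ne'
    have hc : (C:ℚ) ≠ 0 := by exact_mod_cast hC0.ne'
    field_simp at this
    have h' : (A:ℚ) * Q = P * C := by linear_combination this
    exact_mod_cast h'
  have hAC : IsCoprime A C :=
    (coprime_of_det A (ct l).2.1 C (ct l).2.2.2 ((-1)^l.length) (ct_det l)
      (neg_one_pow _)).1
  have h1 : A ∣ P := by
    have : A ∣ P * C := Dvd.intro Q (by linarith [hcross])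
    exact hAC.dvd_of_dvd_mul_right this
  have h2 : P ∣ A := by
    have : P ∣ A * Q := Dvd.intro C (by linarith [hcross])
    exact hcop.dvd_of_dvd_mul_right this
  have hAP : A = P := Int.dvd_antisymm (le_of_lt hA0) (le_of_lt hP) h1 h2
  refine ⟨hAP, ?_⟩
  subst hAP
  have : A * Q = A * C := by linarith
  exact (mul_left_cancel₀ hA0.ne' this).symm

lemma cf_head_add (x t : ℤ) (l : List ℤ) : cfZ ((x + t) :: l) = cfZ (x :: l) + t := by
  cases l with
  | nil => rw [cfZ_singleton, cfZ_singleton]; push_cast; ring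
  | cons y s =>
    rw [cfZ_cons _ _ (by simp), cfZ_cons _ _ (by simp : (y :: s : List ℤ) ≠ [])]
    push_cast
    ring

lemma cf_append_one (l : List ℤ) (y : ℤ) : cfZ (l ++ [y, 1]) = cfZ (l ++ [y + 1]) := by
  induction l with
  | nil =>
    simp only [List.nil_append]
    rw [cfZ_cons y [1] (by simp), cfZ_singleton]
    have : cfZ [y + 1] = ((y + 1 : ℤ) : ℚ) := cfZ_singleton _
    rw [this]
    push_cast
    norm_num
  | cons x t ih =>
    rw [List.cons_append, List.cons_append,
      cfZ_cons x (t ++ [y, 1]) (by simp), cfZ_cons x (t ++ [y + 1]) (by simp), ih]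

lemma headI_of_head? {α : Type*} [Inhabited α] (l : List α) (a : α) (h : l.head? = some a) :
    l.headI = a := by cases l <;> simp_all

def ellOf (l : List ℤ) : ℕ := if l.headI = 1 then l.length - 1 else l.length

lemma ellOf_le (l : List ℤ) : ellOf l ≤ l.length := by
  unfold ellOf; split <;> omega

lemma cr_exists (p q : ℤ) (hp : 2 ≤ p) (hq0 : 0 < q)
    (la : List ℤ) (hane : la ≠ []) (hpos : Pos la) (hlast : LastBig la)
    (hacf : cfZ la = (p:ℚ)/(q:ℚ)) (hA : (ct la).1 = p) :
    ∃ cr : List ℤ, cr ≠ [] ∧ Pos cr ∧ LastBig cr ∧ 2 ≤ cr.headI ∧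
      cfZ cr = (p:ℚ)/(((ct la).2.1 : ℤ) : ℚ) ∧ cr.length = ellOf la := by
  have hrevpos : Pos la.reverse := fun a ha => hpos a (List.mem_reverse.mp ha)
  have hrevne : la.reverse ≠ [] := by simpa using hane
  have hrevcf : cfZ la.reverse = ((ct la).1 : ℚ) / ((ct la).2.1 : ℚ) := by
    have h := cf_eq_div la.reverse hrevne hrevpos
    have hr := ct_reverse la
    rw [h, hr.1, hr.2.2.1]
  rw [hA] at hrevcf
  rcases la with _ | ⟨a1, t⟩
  · exact absurd rfl hane
  by_cases ha1 : a1 = 1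
  · -- head = 1
    subst ha1
    rcases t with _ | ⟨a2, rest⟩
    · exfalso; have := hlast 1 rfl; omega
    refine ⟨rest.reverse ++ [a2 + 1], by simp, ?_, ?_, ?_, ?_, ?_⟩
    · intro x hx
      rcases List.mem_append.mp hx with h | h
      · exact hpos x (by simp [List.mem_reverse.mp h])
      · have : x = a2 + 1 := by simpa using h
        have : 0 < a2 := hpos a2 (by simp)
        omega
    · intro a haa
      rw [List.getLast?_concat] at haa
      have : a = a2 + 1 := (by simpa using haa : a2 + 1 = a).symm
      have : 0 < a2 := hpos a2 (by simp)
      omega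
    · -- headI ≥ 2
      rcases rest with _ | ⟨r, rs⟩
      · simp only [List.reverse_nil, List.nil_append]
        have : 0 < a2 := hpos a2 (by simp)
        simp [List.headI]
        omega
      · have h1 : ((r :: rs).reverse ++ [a2 + 1]).head? = (r :: rs).getLast? := by
          rw [List.head?_append, List.head?_reverse]
          obtain ⟨g, hg⟩ : ∃ g, (r :: rs).getLast? = some g :=
            Option.isSome_iff_exists.mp (List.getLast?_isSome.mpr (by simp))
          rw [hg]
          rfl
        obtain ⟨g, hg⟩ : ∃ g, (r :: rs).getLast? = some g :=
          Option.isSome_iff_exists.mp (List.getLast?_isSome.mpr (by simp))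
        have hhead := headI_of_head? _ g (by rw [h1, hg])
        rw [hhead]
        exact hlast g (by rwa [List.getLast?_cons_cons, List.getLast?_cons_cons])
    · -- cf value
      have hrev : (1 :: a2 :: rest : List ℤ).reverse = rest.reverse ++ [a2, 1] := by
        simp
      rw [← cf_append_one, ← hrev, hrevcf]
    · -- length
      have hl : (rest.reverse ++ [a2 + 1]).length = rest.length + 1 := by simp
      rw [hl]
      simp [ellOf, List.headI]
  · -- head ≥ 2
    refine ⟨(a1 :: t).reverse, by simp, hrevpos, ?_, ?_, hrevcf, ?_⟩
    · intro a haa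
      rw [List.getLast?_reverse] at haa
      have : a = a1 := (by simpa using haa : a1 = a).symm
      subst this
      have := hpos a (by simp)
      omega
    · obtain ⟨g, hg⟩ : ∃ g, (a1 :: t).getLast? = some g :=
        Option.isSome_iff_exists.mp (List.getLast?_isSome.mpr (by simp))
      have hhead := headI_of_head? (a1 :: t).reverse g (by rw [List.head?_reverse, hg])
      rw [hhead]
      exact hlast g hg
    · simp [ellOf, List.headI, ha1]

lemma numeric (p w : ℤ) (hp : 0 < p) (hw0 : 0 < w) (hwp : w < p) :
    ((p:ℚ)/(w:ℚ))/((p:ℚ)/(w:ℚ) - 1) = (p:ℚ)/(((p - w : ℤ)):ℚ) := by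
  have hw : (0:ℚ) < (w:ℚ) := by exact_mod_cast hw0
  have hpw : (w:ℚ) < (p:ℚ) := by exact_mod_cast hwp
  have h1 : (p:ℚ)/(w:ℚ) - 1 ≠ 0 := ne_of_gt (by rw [sub_pos, lt_div_iff₀ hw]; linarith)
  have h2 : ((p:ℚ) - (w:ℚ)) ≠ 0 := ne_of_gt (by linarith)
  push_cast
  field_simp

lemma one_lt_val (p w : ℤ) (hp : 0 < p) (hw0 : 0 < w) (hwp : w < p) :
    (1:ℚ) < (p:ℚ)/(w:ℚ) := by
  have hw : (0:ℚ) < (w:ℚ) := by exact_mod_cast hw0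
  rw [lt_div_iff₀ hw]
  have : (w:ℚ) < (p:ℚ) := by exact_mod_cast hwp
  linarith

lemma build_one (x : ℤ) (t : List ℤ) (hu : 1 < cfZ (x :: t)) :
    cfZ (1 :: (x - 1) :: t) = cfZ (x :: t) / (cfZ (x :: t) - 1) := by
  set u := cfZ (x :: t) with hudef
  have hX : cfZ ((x - 1) :: t) = u - 1 := by
    have h := cf_head_add (x - 1) 1 t
    have hx1 : x - 1 + 1 = x := by ring
    rw [hx1] at h
    push_cast at h
    linarith
  have hne : u - 1 ≠ 0 := sub_ne_zero.mpr (ne_of_gt hu)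
  rw [cfZ_cons 1 _ (by simp), hX]
  push_cast
  field_simp
  ring

lemma build_two (a2 : ℤ) (rest : List ℤ) (hpos : Pos (a2 :: rest))
    (hu : 1 < cfZ (1 :: a2 :: rest)) :
    cfZ ((a2 + 1) :: rest) = cfZ (1 :: a2 :: rest) / (cfZ (1 :: a2 :: rest) - 1) := by
  set u := cfZ (1 :: a2 :: rest) with hudef
  have hY0 : 0 < cfZ (a2 :: rest) := cf_pos _ (by simp) hpos
  have he : u = 1 + 1 / cfZ (a2 :: rest) := by
    rw [hudef, cfZ_cons 1 _ (by simp)]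
    norm_num
  have h1 : u - 1 = 1 / cfZ (a2 :: rest) := by linarith
  have hY : cfZ (a2 :: rest) = 1 / (u - 1) := by
    rw [h1, one_div_one_div]
  have hcc : cfZ ((a2 + 1) :: rest) = cfZ (a2 :: rest) + 1 := by
    have h := cf_head_add a2 1 rest
    push_cast at h
    linarith
  have hne : u - 1 ≠ 0 := sub_ne_zero.mpr (ne_of_gt hu)
  rw [hcc, hY]
  field_simp
  ring

lemma resolve (p q q' B D u : ℤ) (hcop : IsCoprime p q) (hp : 0 < p)
    (hq'0 : 0 < q') (hq'p : q' < p) (hB0 : 0 < B) (hBp : B < p)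
    (hdet : p * D - B * q = 1 ∨ p * D - B * q = -1)
    (h : 1 - q' * q = p * u ∨ -1 - q' * q = p * u) : q' = B ∨ q' = p - B := by
  have key : p ∣ (q' - B) * q ∨ p ∣ (q' + B) * q := by
    rcases hdet with hd | hd <;> rcases h with hu | hu
    · exact Or.inr ⟨D - u, by linear_combination -hu - hd⟩
    · exact Or.inl ⟨-u - D, by linear_combination -hu + hd⟩
    · exact Or.inl ⟨-u - D, by linear_combination -hu + hd⟩
    · exact Or.inr ⟨D - u, by linear_combination -hu - hd⟩
  rcases key with hk | hk
  · obtain ⟨t, ht⟩ := hcop.dvd_of_dvd_mul_right hk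
    have : t = 0 := by
      rcases lt_trichotomy t 0 with h' | h' | h'
      · exfalso; nlinarith
      · exact h'
      · exfalso; nlinarith
    rw [this, mul_zero] at ht
    left; omega
  · obtain ⟨t, ht⟩ := hcop.dvd_of_dvd_mul_right hk
    have : t = 1 := by
      rcases lt_trichotomy t 1 with h' | h' | h'
      · exfalso; nlinarith
      · exact h'
      · exfalso; nlinarith
    rw [this, mul_one] at ht
    right; omega

/-- Let `p, q` be coprime with `p ≥ 2`, `0 < q < p`, and let `la` be the minimized
positive expansion of `p/q`. Then `ℓ(p,q)` is the minimum, over all `q'` with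
`0 < q' < p` and `q' ≡ ±q^{±1} (mod p)`, of the lengths of positive continued fraction
expansions of `p/q'`. -/
theorem stmt_9 (p q : ℤ) (hp : 2 ≤ p) (hq0 : 0 < q) (hqp : q < p) (hcop : IsCoprime p q)
    (la : List ℤ) (hane : la ≠ []) (hapos : ∀ a ∈ la, 0 < a)
    (halast : ∀ a, la.getLast? = some a → 2 ≤ a)
    (hacf : cf (la.map (fun a => (a : ℚ))) = (p : ℚ) / (q : ℚ)) :
    IsLeast {m : ℕ | ∃ q' : ℤ, 0 < q' ∧ q' < p ∧
        (Int.ModEq p q' q ∨ Int.ModEq p q' (-q) ∨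
          Int.ModEq p (q' * q) 1 ∨ Int.ModEq p (q' * q) (-1)) ∧
        ∃ b : List ℤ, b ≠ [] ∧ (∀ x ∈ b, 0 < x) ∧
          cf (b.map (fun x => (x : ℚ))) = (p : ℚ) / (q' : ℚ) ∧ b.length = m}
      (ellOf la) := by
  have hpos : Pos la := hapos
  have hlast : LastBig la := halast
  have hacf' : cfZ la = (p:ℚ)/(q:ℚ) := hacf
  obtain ⟨hA, hC⟩ := identify la hane hpos p q (by omega) hq0 hcop hacf'
  set B := (ct la).2.1 with hBdef
  set D := (ct la).2.2.2 with hDdef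
  set k := la.length with hkdef
  have hdet : p * D - B * q = (-1) ^ k := by
    have h := ct_det la
    rw [hA, hC] at h
    exact h
  have hdet' : p * D - B * q = 1 ∨ p * D - B * q = -1 := by
    rcases neg_one_pow k with h | h <;> rw [hdet, h] <;> [left; right] <;> rfl
  have hbnd := ct_bounds la hane hpos
  rw [hA, hC] at hbnd
  have hlt := ct_last la hane hpos hlast
  rw [hA, hC] at hlt
  have hB1 : 1 ≤ B := hbnd.2.1
  have hBp : B < p := by omega
  have hD0 : 0 ≤ D := hbnd.2.2.2.1
  obtain ⟨cr, hcrne, hcrpos, hcrlast, hcrhead, hcrcf, hcrlen⟩ :=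
    cr_exists p q hp hq0 la hane hpos hlast hacf' hA
  have hcopB : IsCoprime p B :=
    (coprime_of_det p B q D ((-1)^k) hdet (neg_one_pow k)).2
  constructor
  · -- membership
    refine ⟨B, by omega, hBp, ?_, cr, hcrne, hcrpos, hcrcf, hcrlen⟩
    right; right
    rcases neg_one_pow k with he | he
    · right
      rw [Int.modEq_iff_dvd]
      rw [he] at hdet
      exact ⟨-D, by linarith⟩
    · left
      rw [Int.modEq_iff_dvd]
      rw [he] at hdet
      exact ⟨-D, by linarith⟩
  · -- lower bound
    rintro m ⟨q', hq'0, hq'p, hcong, bl, hblne, hblpos, hblcf, hbllen⟩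
    have hblcf' : cfZ bl = (p:ℚ)/((q':ℤ):ℚ) := hblcf
    have hblpos' : Pos bl := hblpos
    have conclude : ∀ cc : List ℤ, cc ≠ [] → Pos cc → LastBig cc →
        cfZ cc = (p:ℚ)/((q':ℤ):ℚ) → ellOf la ≤ cc.length → ellOf la ≤ m := by
      intro cc h1 h2 h3 h4 h5
      have := min_length bl cc hblpos' h2 hblne h1 h3 (by rw [hblcf', h4])
      omega
    by_cases hq'q : q' = q
    · subst hq'q
      exact conclude la hane hpos hlast hacf' (ellOf_le la)
    by_cases hq'B : q' = B
    · subst hq'B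
      exact conclude cr hcrne hcrpos hcrlast hcrcf (by omega)
    -- helper for the p - w value, w ∈ {q, B}
    have hval : ∀ w : ℤ, 0 < w → w < p → q' = p - w →
        ∀ x t', Pos (x :: t') → 2 ≤ x → cfZ (x :: t') = (p:ℚ)/(w:ℚ) →
        cfZ (1 :: (x-1) :: t') = (p:ℚ)/((q':ℤ):ℚ) := by
      intro w hw0 hwp hq'w x t' hpxt hx2 hcfx
      have h1 := build_one x t' (by rw [hcfx]; exact one_lt_val p w (by omega) hw0 hwp)
      rw [h1, hcfx, numeric p w (by omega) hw0 hwp, hq'w]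
    rcases hcong with h | h | h | h
    · -- q' ≡ q : contradiction with hq'q
      exfalso
      obtain ⟨t, ht⟩ := Int.ModEq.dvd h
      have : t = 0 := by
        rcases lt_trichotomy t 0 with h' | h' | h'
        · exfalso; nlinarith
        · exact h'
        · exfalso; nlinarith
      rw [this, mul_zero] at ht
      exact hq'q (by omega)
    · -- q' ≡ -q : q' = p - q
      obtain ⟨t, ht⟩ := Int.ModEq.dvd h
      have : t = -1 := by
        rcases lt_trichotomy t (-1) with h' | h' | h'
        · exfalso; nlinarith
        · exact h'
        · exfalso; nlinarith
      rw [this] at ht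
      have hq'' : q' = p - q := by omega
      rcases la with _ | ⟨a1, t0⟩
      · exact absurd rfl hane
      by_cases ha1 : a1 = 1
      · subst ha1
        rcases t0 with _ | ⟨a2, rest⟩
        · exfalso; have := hlast 1 rfl; omega
        have hpos2 : Pos (a2 :: rest) := fun a ha => hpos a (List.mem_cons_of_mem _ ha)
        have hcc : cfZ ((a2+1) :: rest) = (p:ℚ)/((q':ℤ):ℚ) := by
          have h2 := build_two a2 rest hpos2
            (by rw [hacf']; exact one_lt_val p q (by omega) hq0 hqp)
          rw [h2, hacf', numeric p q (by omega) hq0 hqp, hq'']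
        refine conclude ((a2+1) :: rest) (by simp) ?_ ?_ hcc ?_
        · intro a ha
          rcases List.mem_cons.mp ha with rfl | ha'
          · have := hpos2 a2 (by simp); omega
          · exact hpos2 a (List.mem_cons_of_mem _ ha')
        · intro a ha
          rcases rest with _ | ⟨r, rs⟩
          · have : a = a2 + 1 := (by simpa using ha : a2 + 1 = a).symm
            have := hpos2 a2 (by simp)
            omega
          · exact hlast a (by rwa [List.getLast?_cons_cons, List.getLast?_cons_cons,
              ← List.getLast?_cons_cons (a := a2+1)])
        · have : ellOf (1 :: a2 :: rest) = rest.length + 1 := by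
            simp [ellOf, List.headI]
          simp only [List.length_cons, this]
          omega
      · -- a1 ≥ 2
        have ha12 : 2 ≤ a1 := by have := hpos a1 (by simp); omega
        have hcc : cfZ (1 :: (a1-1) :: t0) = (p:ℚ)/((q':ℤ):ℚ) :=
          hval q hq0 hqp hq'' a1 t0 hpos ha12 hacf'
        refine conclude (1 :: (a1-1) :: t0) (by simp) ?_ ?_ hcc ?_
        · intro a ha
          rcases List.mem_cons.mp ha with rfl | ha'
          · omega
          rcases List.mem_cons.mp ha' with rfl | ha''
          · omega
          · exact hpos a (List.mem_cons_of_mem _ ha'')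
        · intro a ha
          rcases t0 with _ | ⟨r, rs⟩
          · -- la = [a1], so p = a1, q = 1
            have e1 : (ct [a1]).1 = a1 := by simp [ct]
            have e2 : (ct [a1]).2.2.1 = 1 := by simp [ct]
            have ha1p : a1 = p := by rw [e1] at hA; exact hA
            have hq1 : q = 1 := by rw [e2] at hC; exact hC.symm
            have hp3 : 3 ≤ p := by
              by_contra hh
              exact hq'q (by omega)
            have : a = a1 - 1 := (by simpa using ha : a1 - 1 = a).symm
            omega
          · exact hlast a (by
              rwa [List.getLast?_cons_cons, List.getLast?_cons_cons,
                ← List.getLast?_cons_cons (a := a1)] at ha)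
        · have h5 := ellOf_le (a1 :: t0)
          simp only [List.length_cons] at *
          omega
    all_goals {
      -- q'·q ≡ ±1 : q' = B or p - B
      obtain ⟨u, hu⟩ := Int.ModEq.dvd h
      have hres := resolve p q q' B D u hcop (by omega) hq'0 hq'p (by omega) hBp hdet'
        (by first
          | exact Or.inl (by linarith)
          | exact Or.inr (by linarith))
      rcases hres with rfl | hq''
      · exact absurd rfl hq'B
      rcases cr with _ | ⟨h0, tcr⟩
      · exact absurd rfl hcrne
      have hh02 : 2 ≤ h0 := by simpa [List.headI] using hcrhead
      have hcc : cfZ (1 :: (h0-1) :: tcr) = (p:ℚ)/((q':ℤ):ℚ) :=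
        hval B (by omega) hBp hq'' h0 tcr hcrpos hh02 hcrcf
      refine conclude (1 :: (h0-1) :: tcr) (by simp) ?_ ?_ hcc ?_
      · intro a ha
        rcases List.mem_cons.mp ha with rfl | ha'
        · omega
        rcases List.mem_cons.mp ha' with rfl | ha''
        · omega
        · exact hcrpos a (List.mem_cons_of_mem _ ha'')
      · intro a ha
        rcases tcr with _ | ⟨r, rs⟩
        · -- cr = [h0]: h0 = p, B = 1
          obtain ⟨hcrA, hcrC⟩ := identify [h0] (by simp) hcrpos p B (by omega) (by omega)
            hcopB hcrcf
          have : h0 = p := by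
            have e : (ct [h0]).1 = h0 := by simp [ct]
            omega
          have hBone : B = 1 := by
            have e : (ct [h0]).2.2.1 = 1 := by simp [ct]
            omega
          have hp3 : 3 ≤ p := by
            rcases lt_or_ge p 3 with hh | hh
            · exfalso
              have : B = 1 := hBone
              have : q' = 1 := by omega
              have : q = 1 := by omega
              omega
            · exact hh
          have : a = h0 - 1 := (by simpa using ha : h0 - 1 = a).symm
          omega
        · exact hcrlast a (by
            rwa [List.getLast?_cons_cons, List.getLast?_cons_cons,
              ← List.getLast?_cons_cons (a := h0)] at ha)
      · simp only [List.length_cons] at hcrlen ⊢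
        omega
    }
end
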